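/- Let (K, v) be a valued field, L/K a finite field extension, and w a valuation on L extending v. Write e := (w(L*) : v(K*)) and f := [Lw : Kv], and assume [L : K] = e·f. Let α ∈ L be such that e is the least positive integer with e·w(α) ∈ v(K*), let u ∈ K with v(u) = e·w(α), and suppose that the residue of α^e/u (an element of w-value 0) generates Lw over Kv, i.e., [Kv((α^e/u)w) : Kv] = f. Then L = K(α). -/

import Mathlib

open IsLocalRing

/-- The value group `w(F*)`, as a subgroup of `Γ₀ˣ`. -/
def valueSubgroup {F Γ₀ : Type*} [Field F] [LinearOrderedCommGroupWithZero Γ₀]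
    (w : Valuation F Γ₀) : Subgroup Γ₀ˣ where
  carrier := {γ : Γ₀ˣ | ∃ x : F, x ≠ 0 ∧ w x = (γ : Γ₀)}
  one_mem' := ⟨1, one_ne_zero, by simp⟩
  mul_mem' := by
    rintro a b ⟨x, hx, hwx⟩ ⟨y, hy, hwy⟩
    exact ⟨x * y, mul_ne_zero hx hy, by rw [map_mul, hwx, hwy]; rfl⟩
  inv_mem' := by
    rintro a ⟨x, hx, hwx⟩
    refine ⟨x⁻¹, inv_ne_zero hx, ?_⟩
    rw [map_inv₀, hwx, Units.val_inv_eq_inv_val]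

/-!
The `e·f` elements `α^i t^j` (`i < e`, `j < f`, `t = α^e/u`) of `K(α)` are `K`-linearly
independent, so `[K(α) : K] ≥ e·f = [L : K]`. Since the residues of `1, t, …, t^(f-1)` are
`Kv`-linearly independent, a `K`-combination `s = ∑ c_j t^j` has `w(s) = max_j v(c_j) ∈ v(K)`.
Hence the nonzero terms `α^i s_i` of a vanishing combination lie in the pairwise distinct cosets
`w(α)^i v(K*)`, so by the strict triangle inequality they cannot cancel.
-/

open IntermediateField

theorem Valuation.eq_zero_of_sum_eq_zero {R Γ₀ ι : Type*} [DivisionRing R]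
    [LinearOrderedCommGroupWithZero Γ₀] [Fintype ι] (w : Valuation R Γ₀) {x : ι → R}
    (hx : ∀ i j, x i ≠ 0 → w (x i) = w (x j) → i = j) (hsum : ∑ i, x i = 0) (i : ι) :
    x i = 0 := by
  classical
  by_contra hi
  have : Nonempty ι := ⟨i⟩
  obtain ⟨i₀, hi₀⟩ := Finite.exists_max fun j => w (x j)
  have hx₀ : x i₀ ≠ 0 := fun h =>
    hi (w.zero_iff.mp (le_antisymm (by simpa [h] using hi₀ i) zero_le))
  have hlt : ∀ j ∈ Finset.univ \ {i₀}, w (x j) < w (x i₀) := fun j hj =>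
    (hi₀ j).lt_of_ne fun h =>
      (Finset.mem_sdiff.mp hj).2 (Finset.mem_singleton.mpr (hx i₀ j hx₀ h.symm).symm)
  have hsum_val := w.map_sum_eq_of_lt (Finset.mem_univ i₀) hlt
  rw [hsum, map_zero] at hsum_val
  exact hx₀ (w.zero_iff.mp hsum_val.symm)

theorem IntermediateField.linearIndependent_pow_finrank_adjoin {F E : Type*} [Field F] [Field E]
    [Algebra F E] (x : E) :
    LinearIndependent F fun i : Fin (Module.finrank F F⟮x⟯) => x ^ (i : ℕ) := by
  by_cases hx : IsIntegral F x
  · rw [adjoin.finrank hx]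
    exact linearIndependent_pow x
  · have : ¬ Module.Finite F F⟮x⟯ := fun h =>
      hx ((AdjoinSimple.isIntegral_gen F x).mp (.of_finite F _))
    rw [Module.finrank_of_not_finite this]
    exact linearIndependent_empty_type

theorem IntermediateField.eq_top_of_linearIndependent {K L ι : Type*} [Field K] [Field L]
    [Algebra K L] [FiniteDimensional K L] [Fintype ι] {S : IntermediateField K L} {b : ι → L}
    (hb : LinearIndependent K b) (hmem : ∀ i, b i ∈ S)
    (hcard : Module.finrank K L ≤ Fintype.card ι) : S = ⊤ := by
  refine eq_of_le_of_finrank_le le_top ?_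
  rw [finrank_top']
  have hbS : LinearIndependent K fun i => (⟨b i, hmem i⟩ : S) := .of_comp S.val.toLinearMap hb
  exact hcard.trans hbS.fintype_card_le_finrank

section Extension

variable {K L Γ₀ : Type*} [Field K] [Field L] [LinearOrderedCommGroupWithZero Γ₀]
  {v : Valuation K Γ₀} {w : Valuation L Γ₀}

theorem eq_of_pow_mul_valuation_eq {α : L} (hα : α ≠ 0) {e : ℕ}
    (hleast : ∀ k : ℕ, 0 < k → k < e → ¬∃ x : K, x ≠ 0 ∧ v x = w α ^ k)
    {i j : ℕ} (hi : i < e) (hj : j < e) {a b : K} (ha : a ≠ 0) (hb : b ≠ 0)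
    (h : w α ^ i * v a = w α ^ j * v b) : i = j := by
  wlog hij : i ≤ j generalizing i j a b
  · exact (this hj hi hb ha h.symm (le_of_not_ge hij)).symm
  obtain ⟨k, rfl⟩ := Nat.exists_eq_add_of_le hij
  rcases k.eq_zero_or_pos with rfl | hk
  · rfl
  rw [pow_add, mul_assoc] at h
  have h := mul_left_cancel₀ (pow_ne_zero _ (w.ne_zero_iff.mpr hα)) h
  refine absurd ⟨a / b, div_ne_zero ha hb, ?_⟩ (hleast k hk (by omega))
  rw [map_div₀, h, mul_div_cancel_right₀ _ (v.ne_zero_iff.mpr hb)]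

variable [Algebra K L]

theorem exists_valuation_sum_smul_eq (hext : ∀ x : K, w (algebraMap K L x) = v x)
    [Algebra (ResidueField v.valuationSubring) (ResidueField w.valuationSubring)]
    (hcompat : ∀ (x : K) (hx : x ∈ v.valuationSubring)
        (hx' : algebraMap K L x ∈ w.valuationSubring),
      algebraMap (ResidueField v.valuationSubring) (ResidueField w.valuationSubring)
          (residue _ ⟨x, hx⟩) =
        residue _ ⟨algebraMap K L x, hx'⟩)
    {ι : Type*} [Fintype ι] [Nonempty ι] {b : ι → w.valuationSubring}
    (hb : LinearIndependent (ResidueField v.valuationSubring) fun i => residue _ (b i))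
    (c : ι → K) :
    ∃ m, (∀ i, v (c i) ≤ v (c m)) ∧ w (∑ i, c i • (b i : L)) = v (c m) := by
  obtain ⟨m, hm⟩ := Finite.exists_max fun i => v (c i)
  refine ⟨m, hm, ?_⟩
  by_cases hcm : c m = 0
  · have hc : ∀ i, c i = 0 := fun i =>
      v.zero_iff.mp (le_antisymm (by simpa [hcm] using hm i) zero_le)
    simp [hc]
  let d : ι → v.valuationSubring := fun i => ⟨c i / c m, by
    rw [Valuation.mem_valuationSubring_iff, map_div₀]; exact div_le_one_of_le₀ (hm i) zero_le⟩
  have hd : ∀ i, algebraMap K L (d i) ∈ w.valuationSubring := fun i => by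
    rw [Valuation.mem_valuationSubring_iff, hext]; exact (d i).2
  -- `y = s / c m` has nonzero residue (its coefficient at `b m` is `1`), so `w y = 1`.
  let y : w.valuationSubring := ∑ i, ⟨algebraMap K L (d i), hd i⟩ * b i
  have hsum : ∑ i, c i • (b i : L) = algebraMap K L (c m) * y := by
    rw [AddSubmonoidClass.coe_finsetSum, Finset.mul_sum]
    refine Finset.sum_congr rfl fun i _ => ?_
    rw [Algebra.smul_def, MulMemClass.coe_mul, ← mul_assoc, ← map_mul, mul_div_cancel₀ _ hcm]
  have hres : residue _ y = ∑ i, residue _ (d i) • residue _ (b i) := by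
    simp only [y, map_sum, map_mul, Algebra.smul_def]
    exact Finset.sum_congr rfl fun i _ => congrArg (· * _) (hcompat _ (d i).2 (hd i)).symm
  have hdm : residue _ (d m) = 1 := by
    rw [show d m = 1 from Subtype.ext (div_self hcm), map_one]
  have hy : residue _ y ≠ 0 := fun h0 =>
    one_ne_zero (hdm ▸ Fintype.linearIndependent_iff.mp hb _ (hres ▸ h0) m)
  have hwy : w y = 1 :=
    (Valuation.valuationSubring.integers w).one_of_isUnit ((residue_ne_zero_iff_isUnit y).mp hy)
  rw [hsum, map_mul, hext, hwy, mul_one]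

theorem linearIndependent_pow_mul_of_residue (hext : ∀ x : K, w (algebraMap K L x) = v x)
    [Algebra (ResidueField v.valuationSubring) (ResidueField w.valuationSubring)]
    (hcompat : ∀ (x : K) (hx : x ∈ v.valuationSubring)
        (hx' : algebraMap K L x ∈ w.valuationSubring),
      algebraMap (ResidueField v.valuationSubring) (ResidueField w.valuationSubring)
          (residue _ ⟨x, hx⟩) =
        residue _ ⟨algebraMap K L x, hx'⟩)
    {ι : Type*} [Fintype ι] {b : ι → w.valuationSubring}
    (hb : LinearIndependent (ResidueField v.valuationSubring) fun i => residue _ (b i))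
    {α : L} (hα : α ≠ 0) {e : ℕ}
    (hleast : ∀ k : ℕ, 0 < k → k < e → ¬∃ x : K, x ≠ 0 ∧ v x = w α ^ k) :
    LinearIndependent K fun p : Fin e × ι => α ^ (p.1 : ℕ) * b p.2 := by
  rcases isEmpty_or_nonempty ι with hι | hι
  · exact linearIndependent_empty_type
  refine Fintype.linearIndependent_iff.mpr fun g hg => ?_
  let s : Fin e → L := fun i => ∑ j, g (i, j) • (b j : L)
  choose m hm hs using fun i =>
    exists_valuation_sum_smul_eq hext hcompat hb fun j => g (i, j)
  replace hs : ∀ i, w (s i) = v (g (i, m i)) := hs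
  have hrows : ∑ i : Fin e, α ^ (i : ℕ) * s i = 0 := by
    rw [← hg, Fintype.sum_prod_type]
    refine Finset.sum_congr rfl fun i _ => ?_
    simp only [s, Finset.mul_sum, mul_smul_comm]
  have hval : ∀ i : Fin e, w (α ^ (i : ℕ) * s i) = w α ^ (i : ℕ) * v (g (i, m i)) :=
    fun i => by rw [map_mul, map_pow, hs]
  have hg0 : ∀ i : Fin e, α ^ (i : ℕ) * s i ≠ 0 → g (i, m i) ≠ 0 := fun i h h0 =>
    h (w.zero_iff.mp (by rw [hval, h0, map_zero, mul_zero]))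
  have hs0 : ∀ i : Fin e, α ^ (i : ℕ) * s i = 0 := by
    refine w.eq_zero_of_sum_eq_zero (fun i i' hne heq => Fin.ext ?_) hrows
    have hne' : α ^ (i' : ℕ) * s i' ≠ 0 := fun h0 =>
      hne (w.zero_iff.mp (by rw [heq, h0, map_zero]))
    exact eq_of_pow_mul_valuation_eq hα hleast i.2 i'.2 (hg0 i hne) (hg0 i' hne')
      (by rwa [← hval, ← hval])
  rintro ⟨i, j⟩
  have hgm : v (g (i, m i)) = 0 := by
    rw [← hs i, (mul_eq_zero.mp (hs0 i)).resolve_left (pow_ne_zero _ hα), map_zero]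
  exact v.zero_iff.mp (le_antisymm (hgm ▸ hm i j) zero_le)

end Extension

theorem depth_one_generator_general {K L Γ₀ : Type*} [Field K] [Field L] [Algebra K L]
    [FiniteDimensional K L] [LinearOrderedCommGroupWithZero Γ₀]
    (v : Valuation K Γ₀) (w : Valuation L Γ₀)
    (hext : ∀ x : K, w (algebraMap K L x) = v x)
    [Algebra (ResidueField v.valuationSubring) (ResidueField w.valuationSubring)]
    (hcompat : ∀ (x : K) (hx : x ∈ v.valuationSubring)
        (hx' : algebraMap K L x ∈ w.valuationSubring),
      algebraMap (ResidueField v.valuationSubring) (ResidueField w.valuationSubring)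
          (residue _ ⟨x, hx⟩) =
        residue _ ⟨algebraMap K L x, hx'⟩)
    (e f : ℕ)
    (hd : Module.finrank K L = e * f)
    (α : L) (hα0 : α ≠ 0)
    (hleast : ∀ k : ℕ, 0 < k → k < e → ¬∃ x : K, x ≠ 0 ∧ v x = w α ^ k)
    (u : K)
    (hmem : α ^ e / algebraMap K L u ∈ w.valuationSubring)
    (hgen : Module.finrank (ResidueField v.valuationSubring)
      (IntermediateField.adjoin (ResidueField v.valuationSubring)
        {residue w.valuationSubring ⟨α ^ e / algebraMap K L u, hmem⟩}) = f) :
    IntermediateField.adjoin K {α} = ⊤ := by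
  let t : w.valuationSubring := ⟨α ^ e / algebraMap K L u, hmem⟩
  have hres : LinearIndependent (ResidueField v.valuationSubring)
      fun j : Fin f => residue _ (t ^ (j : ℕ)) := by
    simpa only [map_pow] using hgen ▸ linearIndependent_pow_finrank_adjoin (residue _ t)
  have hαK : α ∈ K⟮α⟯ := mem_adjoin_simple_self K α
  have htK : (t : L) ∈ K⟮α⟯ := div_mem (pow_mem hαK e) (K⟮α⟯.algebraMap_mem u)
  refine eq_top_of_linearIndependent
    (linearIndependent_pow_mul_of_residue hext hcompat hres hα0 hleast)
    (fun p => mul_mem (pow_mem hαK _) ?_) (by simp [hd])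
  rw [SubmonoidClass.coe_pow]
  exact pow_mem htK _

/-- Suppose `[L : K] = e·f` where `e` is the ramification index and `f` the residue degree.
If `α ∈ L` is such that `e` is the least positive integer with `e·w(α) ∈ v(K*)`, `u ∈ K`
has `v(u) = e·w(α)`, and the residue of `α^e/u` generates a degree-`f` subextension of
`Lw/Kv`, then `L = K(α)`. -/
theorem depth_one_generator {K L Γ₀ : Type*} [Field K] [Field L] [Algebra K L]
    [FiniteDimensional K L] [LinearOrderedCommGroupWithZero Γ₀]
    (v : Valuation K Γ₀) (w : Valuation L Γ₀)
    (hext : ∀ x : K, w (algebraMap K L x) = v x)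
    [Algebra (ResidueField v.valuationSubring) (ResidueField w.valuationSubring)]
    (hcompat : ∀ (x : K) (hx : x ∈ v.valuationSubring)
        (hx' : algebraMap K L x ∈ w.valuationSubring),
      algebraMap (ResidueField v.valuationSubring) (ResidueField w.valuationSubring)
          (residue _ ⟨x, hx⟩) =
        residue _ ⟨algebraMap K L x, hx'⟩)
    (e f : ℕ)
    (he : (valueSubgroup v).relIndex (valueSubgroup w) = e)
    (hf : Module.finrank (ResidueField v.valuationSubring)
      (ResidueField w.valuationSubring) = f)
    (hd : Module.finrank K L = e * f)
    (α : L) (hα0 : α ≠ 0)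
    (hepos : 0 < e)
    (hleast : ∀ k : ℕ, 0 < k → k < e → ¬∃ x : K, x ≠ 0 ∧ v x = w α ^ k)
    (u : K) (hu0 : u ≠ 0) (hu : v u = w α ^ e)
    (hmem : α ^ e / algebraMap K L u ∈ w.valuationSubring)
    (hgen : Module.finrank (ResidueField v.valuationSubring)
      (IntermediateField.adjoin (ResidueField v.valuationSubring)
        {residue w.valuationSubring ⟨α ^ e / algebraMap K L u, hmem⟩}) = f) :
    IntermediateField.adjoin K {α} = ⊤ :=
  depth_one_generator_general v w hext hcompat e f hd α hα0 hleast u hmem hgen
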